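/- arXiv:0812.1475 — 2 statements merged into one kernel-verified Lean document; each statement's English description precedes it below -/
import Mathlib

section
/- Let Λ be a hereditary artin algebra, T a Λ-module, and M an indecomposable Λ-module with Ext^1(T,M) = 0. Then the minimal left add(T)-approximation λ_M: M → _M T is either a monomorphism or an epimorphism. -/
/-- `X` is (isomorphic to) a direct summand of `M`. -/
def IsSummand (Λ : Type) [Ring Λ] (X M : Type) [AddCommGroup X] [Module Λ X]
    [AddCommGroup M] [Module Λ M] : Prop :=
  ∃ (i : X →ₗ[Λ] M) (p : M →ₗ[Λ] X), p ∘ₗ i = LinearMap.id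

/-- `X` belongs to `add T`, the additive subcategory generated by the
indecomposable direct summands of `T`. -/
def InAdd (Λ : Type) [Ring Λ] (T X : Type) [AddCommGroup T] [Module Λ T]
    [AddCommGroup X] [Module Λ X] : Prop :=
  ∃ n : ℕ, IsSummand Λ X (Fin n → T)

/-- `Ext¹_Λ(A, B) = 0`: every short exact sequence `0 → B → E → A → 0` splits. -/
def Ext1Zero (Λ : Type) [Ring Λ] (A B : Type) [AddCommGroup A] [Module Λ A]
    [AddCommGroup B] [Module Λ B] : Prop :=
  ∀ (E : Type) [AddCommGroup E] [Module Λ E] (i : B →ₗ[Λ] E) (p : E →ₗ[Λ] A),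
    Function.Injective i → Function.Surjective p → LinearMap.ker p = LinearMap.range i →
    ∃ r : E →ₗ[Λ] B, r ∘ₗ i = LinearMap.id

/-- An indecomposable module: nonzero, and admitting no nontrivial direct sum
decomposition. -/
def IsIndec (Λ : Type) [Ring Λ] (M : Type) [AddCommGroup M] [Module Λ M] : Prop :=
  (∃ m : M, m ≠ 0) ∧ ∀ N N' : Submodule Λ M, IsCompl N N' → N = ⊥ ∨ N' = ⊥

/-- A hereditary ring: submodules of projective modules are projective. -/
def IsHereditaryRing (Λ : Type) [Ring Λ] : Prop :=
  ∀ (M : Type) [AddCommGroup M] [Module Λ M], Module.Projective Λ M →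
    ∀ N : Submodule Λ M, Module.Projective Λ N


/-! Suppose `f` is neither injective nor surjective and factor it as `M ↠ I ↪ T' ↪ Tⁿ`. As `Λ` is
hereditary, the extension `0 → ker f → M → I → 0` is pulled back from one of `Tⁿ`, and since
`Ext¹(Tⁿ, M) = 0` this produces an endomorphism `t` of `M` fixing `ker f ≠ 0` pointwise and
inducing on `I` an endomorphism `h u` that factors through `Tⁿ`. By Fitting's lemma `t` is an
automorphism, hence so is `h u`, and `θ = (h u)⁻¹ h : T' → I ⊆ T'` satisfies `θ f = f` without
being surjective, against minimality. -/

open Function LinearMap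

section

variable {Λ : Type} [Ring Λ]

theorem LinearMap.exists_comp_eq_of_ker_le {E A B : Type*} [AddCommGroup E] [Module Λ E]
    [AddCommGroup A] [Module Λ A] [AddCommGroup B] [Module Λ B]
    {p : E →ₗ[Λ] A} (hp : Surjective p) (g : E →ₗ[Λ] B) (hpg : ker p ≤ ker g) :
    ∃ h : A →ₗ[Λ] B, h ∘ₗ p = g :=
  ⟨(ker p).liftQ g hpg ∘ₗ (p.quotKerEquivOfSurjective hp).symm.toLinearMap,
    LinearMap.ext fun x => by simp⟩

namespace Ext1Zero

variable {N M : Type} [AddCommGroup N] [Module Λ N] [AddCommGroup M] [Module Λ M]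

/-- Push the extension `ker q → F → N` out along `c` and split it. -/
theorem exists_extend (hext : Ext1Zero Λ N M) {F : Type} [AddCommGroup F] [Module Λ F]
    {q : F →ₗ[Λ] N} (hq : Surjective q) (c : ker q →ₗ[Λ] M) :
    ∃ ψ : F →ₗ[Λ] M, ψ ∘ₗ (ker q).subtype = c := by
  let V : Submodule Λ (M × F) := range (c.prod (-(ker q).subtype))
  let i : M →ₗ[Λ] (M × F) ⧸ V := V.mkQ ∘ₗ inl Λ M F
  let p : (M × F) ⧸ V →ₗ[Λ] N := V.liftQ (q ∘ₗ snd Λ M F) (by rintro _ ⟨k, rfl⟩; simp)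
  have hglue : ∀ k : ker q, V.mkQ (0, (k : F)) = i (c k) := fun k => by
    simp only [i, Submodule.mkQ_apply]
    exact (Submodule.Quotient.eq V).mpr ⟨-k, by simp⟩
  have hi : Injective i := by
    refine (injective_iff_map_eq_zero i).mpr fun m hm => ?_
    obtain ⟨k, hk⟩ := (Submodule.Quotient.mk_eq_zero V).mp hm
    have hk0 : k = 0 := by simpa using congrArg Prod.snd hk
    simpa [hk0] using (congrArg Prod.fst hk).symm
  have hp : Surjective p := fun n =>
    let ⟨x, hx⟩ := hq n
    ⟨V.mkQ (0, x), by simpa [p] using hx⟩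
  have hip : ker p = range i := by
    refine le_antisymm (fun z hz => ?_) (range_le_ker_iff.mpr (by ext; simp [i, p]))
    obtain ⟨⟨m, x⟩, rfl⟩ := V.mkQ_surjective z
    have hx : x ∈ ker q := hz
    refine ⟨m + c ⟨x, hx⟩, ?_⟩
    rw [map_add, ← hglue ⟨x, hx⟩, show i m = V.mkQ (m, 0) from rfl, ← map_add, Prod.mk_add_mk,
      add_zero, zero_add]
  obtain ⟨r, hr⟩ := hext _ i p hi hp hip
  refine ⟨r ∘ₗ V.mkQ ∘ₗ inr Λ M F, LinearMap.ext fun k => ?_⟩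
  simpa [hglue] using LinearMap.congr_fun hr (c k)

/-- Pull the extension `M → E → A` back along `g` and split it. -/
theorem exists_lift {B E A : Type} [AddCommGroup B] [Module Λ B] [AddCommGroup E] [Module Λ E]
    [AddCommGroup A] [Module Λ A] (hext : Ext1Zero Λ B M) {i : M →ₗ[Λ] E} {p : E →ₗ[Λ] A}
    (hi : Injective i) (hp : Surjective p) (hip : ker p = range i) (g : B →ₗ[Λ] A) :
    ∃ s : B →ₗ[Λ] E, p ∘ₗ s = g := by
  let P : Submodule Λ (B × E) := ker (g ∘ₗ fst Λ B E - p ∘ₗ snd Λ B E)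
  have hiP : ∀ m, (0, i m) ∈ P := fun m => by
    simp [P, ← mem_ker (f := p), hip]
  let i' : M →ₗ[Λ] P := (inr Λ B E ∘ₗ i).codRestrict P hiP
  let p' : P →ₗ[Λ] B := fst Λ B E ∘ₗ P.subtype
  have hi' : Injective i' := fun m m' h => hi (congrArg (fun z : P => (z : B × E).2) h)
  have hp' : Surjective p' := fun b =>
    let ⟨e, he⟩ := hp (g b)
    ⟨⟨(b, e), by simp [P, he]⟩, rfl⟩
  have hexact : Function.Exact i' p' := by
    refine exact_iff.mpr (le_antisymm (fun ⟨⟨b, e⟩, hbe⟩ hb => ?_) (range_le_ker_iff.mpr rfl))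
    obtain rfl : b = 0 := hb
    have he : e ∈ ker p := by simpa [P] using hbe
    rw [hip] at he
    obtain ⟨m, rfl⟩ := he
    exact ⟨m, rfl⟩
  obtain ⟨r, hr⟩ := hext P i' p' hi' hp' (exact_iff.mp hexact)
  obtain ⟨s, hs⟩ := (hexact.splitSurjectiveEquiv hi').symm (hexact.splitInjectiveEquiv hp' ⟨r, hr⟩)
  refine ⟨snd Λ B E ∘ₗ P.subtype ∘ₗ s, LinearMap.ext fun b => ?_⟩
  have hsb : (s b : B × E).1 = b := LinearMap.congr_fun hs b
  have hmem : g (s b : B × E).1 - p (s b : B × E).2 = 0 := (s b).2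
  change p (s b : B × E).2 = g b
  rw [← sub_eq_zero.mp hmem, hsb]

theorem pi (hext : Ext1Zero Λ N M) (ι : Type) [Fintype ι] : Ext1Zero Λ (ι → N) M := by
  classical
  intro E _ _ i p hi hp hip
  choose s hs using fun a => hext.exists_lift hi hp hip (single Λ (fun _ => N) a)
  have hsection : p ∘ₗ lsum Λ (fun _ => N) ℕ s = LinearMap.id := by
    refine pi_ext fun a x => ?_
    rw [LinearMap.comp_apply, lsum_piSingle]
    exact LinearMap.congr_fun (hs a) x
  have hexact : Function.Exact i p := exact_iff.mpr hip
  exact ⟨_, ((hexact.splitInjectiveEquiv hp).symm (hexact.splitSurjectiveEquiv hi ⟨_, hsection⟩)).2⟩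

end Ext1Zero

/-- Over a hereditary ring the extension `ker π → M → X` is pulled back along `u` from an
extension of `N`, and `Ext¹(N, M) = 0` turns this into `t`. Concretely: for a free cover `q` of
`N` the submodule `F' = q⁻¹(u X)` is projective, so `q' = u⁻¹ q : F' → X` lifts to
`φ₀ : F' → M`; the restriction of `φ₀` to `ker q` extends to `ψ` on the free module,
`φ₀ - ψ = σ q'` for some `σ : X → M`, and `t = 1 - σ π`. -/
theorem IsHereditaryRing.exists_endomorphism_fixing_ker (hH : IsHereditaryRing Λ)
    {M X N : Type} [AddCommGroup M] [Module Λ M] [AddCommGroup X] [Module Λ X]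
    [AddCommGroup N] [Module Λ N] {π : M →ₗ[Λ] X} (hπ : Surjective π) {u : X →ₗ[Λ] N}
    (hu : Injective u) (hext : Ext1Zero Λ N M) :
    ∃ (t : Module.End Λ M) (h : N →ₗ[Λ] X),
      (∀ k ∈ ker π, t k = k) ∧ π ∘ₗ t = h ∘ₗ u ∘ₗ π := by
  classical
  let q : (N →₀ Λ) →ₗ[Λ] N := Finsupp.linearCombination Λ id
  have hq : Surjective q := Finsupp.linearCombination_id_surjective Λ N
  let F' : Submodule Λ (N →₀ Λ) := (range u).comap q
  have : Module.Projective Λ F' := hH _ inferInstance F'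
  let q' : F' →ₗ[Λ] X := (LinearEquiv.ofInjective u hu).symm.toLinearMap ∘ₗ
    (q ∘ₗ F'.subtype).codRestrict (range u) fun x => x.2
  have huq' : ∀ x, u (q' x) = q x := fun x => LinearEquiv.ofInjective_symm_apply (h := hu) (x := _)
  have hq' : Surjective q' := fun y =>
    let ⟨z, hz⟩ := hq (u y)
    ⟨⟨z, y, hz.symm⟩, hu (by rw [huq', hz])⟩
  obtain ⟨φ₀, hφ₀⟩ := Module.projective_lifting_property π q' hπ
  have hπφ₀ : ∀ x, π (φ₀ x) = q' x := LinearMap.congr_fun hφ₀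
  have hkerq : ker q ≤ F' := fun x hx => ⟨0, by simpa using hx.symm⟩
  obtain ⟨ψ, hψ⟩ := hext.exists_extend hq (φ₀ ∘ₗ Submodule.inclusion hkerq)
  have hψφ₀ : ∀ x : F', q x = 0 → ψ x = φ₀ x := fun x hx =>
    LinearMap.congr_fun hψ ⟨x, hx⟩
  have hq'_of_q : ∀ x : F', q x = 0 → q' x = 0 := fun x hx => hu (by rw [huq', hx, map_zero])
  obtain ⟨h, hh⟩ := exists_comp_eq_of_ker_le hq (π ∘ₗ ψ) fun x hx => by
    have hxF' : x ∈ F' := hkerq hx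
    simpa [hψφ₀ ⟨x, hxF'⟩ hx, hπφ₀] using hq'_of_q ⟨x, hxF'⟩ hx
  obtain ⟨σ, hσ⟩ := exists_comp_eq_of_ker_le (E := F') hq' (φ₀ - ψ ∘ₗ F'.subtype) fun x hx => by
    have hqx : q x = 0 := by rw [← huq', show q' x = 0 from hx, map_zero]
    simp [hψφ₀ x hqx]
  have hπσ : π ∘ₗ σ = LinearMap.id - h ∘ₗ u := by
    refine (cancel_right hq').mp (LinearMap.ext fun x => ?_)
    have hσx : σ (q' x) = φ₀ x - ψ x := LinearMap.congr_fun hσ x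
    have hhx : h (q x) = π (ψ x) := LinearMap.congr_fun hh x
    simp [hσx, hπφ₀, huq', hhx]
  refine ⟨LinearMap.id - σ ∘ₗ π, h, fun k hk => by simp [show π k = 0 from hk], ?_⟩
  ext m
  simpa using congrArg (π m - ·) (LinearMap.congr_fun hπσ (π m))

/-- Fitting's lemma. -/
theorem IsIndec.bijective_or_isNilpotent {M : Type} [AddCommGroup M] [Module Λ M]
    [IsNoetherian Λ M] [IsArtinian Λ M] (hM : IsIndec Λ M) (t : Module.End Λ M) :
    Bijective t ∨ IsNilpotent t := by
  obtain ⟨p, hp⟩ := Filter.eventually_atTop.mp t.eventually_isCompl_ker_pow_range_pow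
  rcases hM.2 _ _ (hp (p + 1) p.le_succ) with hker | hrange
  · refine Or.inl (IsArtinian.bijective_of_injective_endomorphism t ?_)
    rw [← ker_eq_bot, eq_bot_iff, ← hker]
    intro x hx
    rw [mem_ker] at hx ⊢
    rw [pow_succ, Module.End.mul_apply, hx, map_zero]
  · exact Or.inr ⟨p + 1, range_eq_bot.mp hrange⟩

theorem Module.End.not_isNilpotent_of_apply_eq_self {M : Type*} [AddCommGroup M] [Module Λ M]
    {t : Module.End Λ M} {k : M} (hk0 : k ≠ 0) (hk : t k = k) : ¬IsNilpotent t := by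
  rintro ⟨p, hp⟩
  have hpow : (t ^ p) k = k := by rw [Module.End.pow_apply, iterate_fixed hk]
  exact hk0 (by rw [← hpow, hp, LinearMap.zero_apply])

def LinearMap.IsLeftMinimal {M T' : Type*} [AddCommGroup M] [Module Λ M] [AddCommGroup T']
    [Module Λ T'] (f : M →ₗ[Λ] T') : Prop :=
  ∀ θ : T' →ₗ[Λ] T', θ ∘ₗ f = f → Bijective θ

/-- With `ι` the inclusion of `range f`, the endomorphism `ι (φ ι)⁻¹ φ` fixes `f` and has
image in `range f`. -/
theorem LinearMap.IsLeftMinimal.surjective_of_surjective_comp_subtype {M T' : Type}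
    [AddCommGroup M] [Module Λ M] [AddCommGroup T'] [Module Λ T'] {f : M →ₗ[Λ] T'}
    [IsNoetherian Λ (range f)] (hf : f.IsLeftMinimal) (φ : T' →ₗ[Λ] range f)
    (hφ : Surjective (φ ∘ₗ (range f).subtype)) : Surjective f := by
  let e := LinearEquiv.ofBijective _
    ⟨IsNoetherian.injective_of_surjective_endomorphism _ hφ, hφ⟩
  have hθ : ((range f).subtype ∘ₗ e.symm.toLinearMap ∘ₗ φ) ∘ₗ f = f :=
    LinearMap.ext fun m => congrArg Subtype.val (e.symm_apply_apply (f.rangeRestrict m))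
  intro y
  obtain ⟨x, rfl⟩ := (hf _ hθ).2 y
  exact (e.symm (φ x)).2

end

theorem min_left_approx_mono_or_epi_general (Λ : Type) [Ring Λ]
    (hH : IsHereditaryRing Λ)
    (T M T' : Type) [AddCommGroup T] [Module Λ T] [AddCommGroup M] [Module Λ M]
    [AddCommGroup T'] [Module Λ T']
    (hMfl : IsFiniteLength Λ M)
    (hM : IsIndec Λ M) (hext : Ext1Zero Λ T M) (hT' : InAdd Λ T T')
    (f : M →ₗ[Λ] T')
    (hmin : ∀ θ : T' →ₗ[Λ] T', θ ∘ₗ f = f → Function.Bijective θ) :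
    Function.Injective f ∨ Function.Surjective f := by
  obtain ⟨n, j, pj, hpj⟩ := hT'
  obtain ⟨_, _⟩ := isFiniteLength_iff_isNoetherian_isArtinian.mp hMfl
  refine or_iff_not_imp_left.mpr fun hf => ?_
  let u : range f →ₗ[Λ] Fin n → T := j ∘ₗ (range f).subtype
  have hu : Injective u :=
    (LeftInverse.injective (g := pj) (LinearMap.congr_fun hpj)).comp Subtype.val_injective
  obtain ⟨t, h, ht_fix, ht_comm⟩ := hH.exists_endomorphism_fixing_ker
    f.surjective_rangeRestrict hu (hext.pi (Fin n))
  obtain ⟨k, hk, hk0⟩ : ∃ k ∈ ker f, k ≠ 0 :=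
    Submodule.exists_mem_ne_zero_of_ne_bot (mt ker_eq_bot.mp hf)
  have ht : Surjective t := ((hM.bijective_or_isNilpotent t).resolve_right
    (Module.End.not_isNilpotent_of_apply_eq_self hk0 (ht_fix k (by rwa [ker_rangeRestrict])))).2
  have : IsNoetherian Λ (range f) :=
    isNoetherian_of_surjective f.rangeRestrict (range_rangeRestrict f)
  refine IsLeftMinimal.surjective_of_surjective_comp_subtype hmin (h ∘ₗ j) ?_
  have hcomp : Surjective ((h ∘ₗ u) ∘ₗ f.rangeRestrict) := by
    rw [LinearMap.comp_assoc, ← ht_comm]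
    exact f.surjective_rangeRestrict.comp ht
  exact Surjective.of_comp hcomp

/-- Over a hereditary artin algebra, if `M` is indecomposable with
`Ext¹(T, M) = 0`, then the minimal left `add T`-approximation `λ_M : M → T'`
is either a monomorphism or an epimorphism. -/
theorem min_left_approx_mono_or_epi (Λ : Type) [Ring Λ] [IsArtinianRing Λ]
    (hH : IsHereditaryRing Λ)
    (T M T' : Type) [AddCommGroup T] [Module Λ T] [AddCommGroup M] [Module Λ M]
    [AddCommGroup T'] [Module Λ T']
    (hTfl : IsFiniteLength Λ T) (hMfl : IsFiniteLength Λ M)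
    (hM : IsIndec Λ M) (hext : Ext1Zero Λ T M) (hT' : InAdd Λ T T')
    (f : M →ₗ[Λ] T')
    (happrox : ∀ g : M →ₗ[Λ] T, ∃ h : T' →ₗ[Λ] T, h ∘ₗ f = g)
    (hmin : ∀ θ : T' →ₗ[Λ] T', θ ∘ₗ f = f → Function.Bijective θ) :
    Function.Injective f ∨ Function.Surjective f :=
  min_left_approx_mono_or_epi_general Λ hH T M T' hMfl hM hext hT' f hmin
end

section
/- Let ⊥T = {M : Hom(M,T) = 0 = Ext^1(M,T)} for a rigid module T over a hereditary artin algebra Λ. Then ⊥T is an exact abelian subcategory of mod Λ closed under extensions, kernels and cokernels, and is itself hereditary (Ext^2 vanishes in ⊥T). -/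
/-- Membership in the left perpendicular category
`⊥T = {M : Hom(M,T) = 0 = Ext¹(M,T)}`. -/
def InLeftPerp (Λ : Type) [Ring Λ] (T M : Type) [AddCommGroup T] [Module Λ T]
    [AddCommGroup M] [Module Λ M] : Prop :=
  (∀ f : M →ₗ[Λ] T, f = 0) ∧ Ext1Zero Λ M T


/-!
Over a hereditary ring, `Ext¹(-, T)`-vanishing passes to submodules: if `π : F ↠ M` is free and
`N ≤ M`, then `π⁻¹(N) ↠ N` is a projective presentation of `N` with the same kernel as `π`, and a
map from that kernel to `T` which extends over `F` restricts to `π⁻¹(N)`. Hence the image of a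
map between modules of `⊥T` lies in `⊥T`, and the exact sequences `0 → ker f → M → im f → 0` and
`0 → im f → N → coker f → 0`, read through the Hom–Ext sequences of `Hom(-, T)`, put `ker f` and
`coker f` in `⊥T`; the connecting maps of these sequences are realised by pushouts and pullbacks
of extensions.

`Ext²` vanishes because the kernel `K` of a free presentation `F ↠ A` is projective: an extension
of `A` by `C` is the pushout of `K ⊆ F` along some `K → C`, and this map lifts along `B ↠ C`.
-/

open LinearMap
open Function (Injective Surjective Exact)

section Perpendicular

variable {Λ : Type} [Ring Λ]

namespace Function.Exact

variable {M N P X : Type} [AddCommGroup M] [Module Λ M] [AddCommGroup N] [Module Λ N]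
  [AddCommGroup P] [Module Λ P] [AddCommGroup X] [Module Λ X] {f : M →ₗ[Λ] N} {g : N →ₗ[Λ] P}

theorem exists_desc (hfg : Exact f g) (hg : Surjective g) {σ : N →ₗ[Λ] X}
    (hσ : σ ∘ₗ f = 0) : ∃ s : P →ₗ[Λ] X, s ∘ₗ g = σ :=
  ⟨(range f).liftQ σ (by rintro _ ⟨x, rfl⟩; exact congr($hσ x)) ∘ₗ
    (hfg.linearEquivOfSurjective hg).symm.toLinearMap, by ext x; simp⟩

theorem exists_lift (hfg : Exact f g) (hf : Injective f) {φ : X →ₗ[Λ] N}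
    (hφ : g ∘ₗ φ = 0) : ∃ h : X →ₗ[Λ] M, f ∘ₗ h = φ :=
  ⟨(LinearEquiv.ofInjective f hf).symm.toLinearMap ∘ₗ
    φ.codRestrict (range f) (fun x => (hfg _).mp congr($hφ x)),
    by ext x; exact LinearEquiv.ofInjective_symm_apply (h := hf) _ _⟩

theorem exists_retraction_of_section (hfg : Exact f g) (hf : Injective f) (hg : Surjective g)
    {s : P →ₗ[Λ] N} (hs : g ∘ₗ s = LinearMap.id) : ∃ r : N →ₗ[Λ] M, r ∘ₗ f = LinearMap.id :=
  ⟨_, ((hfg.splitInjectiveEquiv hg).symm (hfg.splitSurjectiveEquiv hf ⟨s, hs⟩)).property⟩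

end Function.Exact

section Pushout

variable {A B M C X : Type} [AddCommGroup A] [Module Λ A] [AddCommGroup B] [Module Λ B]
  [AddCommGroup M] [Module Λ M] [AddCommGroup C] [Module Λ C] [AddCommGroup X] [Module Λ X]

abbrev Pushout (α : A →ₗ[Λ] B) (β : A →ₗ[Λ] M) : Type :=
  (B × M) ⧸ range (α.prod (-β))

namespace Pushout

variable (α : A →ₗ[Λ] B) (β : A →ₗ[Λ] M)

def inl : B →ₗ[Λ] Pushout α β := (range (α.prod (-β))).mkQ ∘ₗ LinearMap.inl Λ B M

def inr : M →ₗ[Λ] Pushout α β := (range (α.prod (-β))).mkQ ∘ₗ LinearMap.inr Λ B M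

theorem condition : inl α β ∘ₗ α = inr α β ∘ₗ β := by
  ext a
  exact (Submodule.Quotient.eq _).mpr ⟨a, by simp⟩

variable {α β}

def desc (u : B →ₗ[Λ] X) (v : M →ₗ[Λ] X) (huv : u ∘ₗ α = v ∘ₗ β) : Pushout α β →ₗ[Λ] X :=
  (range (α.prod (-β))).liftQ (u.coprod v) (by
    rintro _ ⟨a, rfl⟩
    have huva : u (α a) = v (β a) := LinearMap.congr_fun huv a
    simp [huva])

@[simp]
theorem desc_comp_inl (u : B →ₗ[Λ] X) (v : M →ₗ[Λ] X) (huv : u ∘ₗ α = v ∘ₗ β) :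
    desc u v huv ∘ₗ inl α β = u := by
  ext; simp [desc, inl]

@[simp]
theorem desc_comp_inr (u : B →ₗ[Λ] X) (v : M →ₗ[Λ] X) (huv : u ∘ₗ α = v ∘ₗ β) :
    desc u v huv ∘ₗ inr α β = v := by
  ext; simp [desc, inr]

theorem hom_ext {f f' : Pushout α β →ₗ[Λ] X} (hl : f ∘ₗ inl α β = f' ∘ₗ inl α β)
    (hr : f ∘ₗ inr α β = f' ∘ₗ inr α β) : f = f' :=
  Submodule.linearMap_qext _ (prod_ext hl hr)

theorem inl_injective (hβ : Injective β) : Injective (inl α β) := by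
  refine (injective_iff_map_eq_zero _).mpr fun b hb => ?_
  obtain ⟨a, ha⟩ := (Submodule.Quotient.mk_eq_zero _).mp hb
  have hαa : α a = b := congr_arg Prod.fst ha
  have hβa : β a = 0 := neg_eq_zero.mp (congr_arg Prod.snd ha)
  rw [← hαa, hβ (hβa.trans (map_zero β).symm), map_zero]

theorem exact_inl_desc {p : M →ₗ[Λ] C} (hβ : Injective β) (hp : Surjective p)
    (hβp : Exact β p) (h0 : 0 ∘ₗ α = p ∘ₗ β) :
    Injective (inl α β) ∧ Surjective (desc 0 p h0) ∧ Exact (inl α β) (desc 0 p h0) := by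
  refine ⟨inl_injective hβ, fun c => ?_, fun y => ?_⟩
  · obtain ⟨m, rfl⟩ := hp c
    exact ⟨inr α β m, congr($(desc_comp_inr 0 p h0) m)⟩
  · obtain ⟨⟨b, m⟩, rfl⟩ := Submodule.Quotient.mk_surjective _ y
    constructor
    · intro hy
      obtain ⟨a, rfl⟩ := (hβp m).mp (by simpa [desc] using hy)
      refine ⟨b + α a, (Submodule.Quotient.eq _).mpr ⟨a, by simp⟩⟩
    · rintro ⟨b', hb'⟩
      rw [← hb']
      exact congr($(desc_comp_inl 0 p h0) b')

end Pushout

end Pushout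

def HomZero (Λ : Type) [Ring Λ] (M T : Type) [AddCommGroup M] [Module Λ M]
    [AddCommGroup T] [Module Λ T] : Prop :=
  ∀ f : M →ₗ[Λ] T, f = 0

section Perp

variable {A C E F K M N T : Type} [AddCommGroup A] [Module Λ A] [AddCommGroup C] [Module Λ C]
  [AddCommGroup E] [Module Λ E] [AddCommGroup F] [Module Λ F] [AddCommGroup K] [Module Λ K]
  [AddCommGroup M] [Module Λ M] [AddCommGroup N] [Module Λ N] [AddCommGroup T] [Module Λ T]

theorem ext1Zero_iff_exact : Ext1Zero Λ A T ↔
    ∀ (E : Type) [AddCommGroup E] [Module Λ E] (i : T →ₗ[Λ] E) (p : E →ₗ[Λ] A),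
      Injective i → Surjective p → Exact i p → ∃ r : E →ₗ[Λ] T, r ∘ₗ i = LinearMap.id := by
  simp only [Ext1Zero, LinearMap.exact_iff]

theorem Ext1Zero.exists_extension (hC : Ext1Zero Λ C T) {i : K →ₗ[Λ] F} {p : F →ₗ[Λ] C}
    (hi : Injective i) (hp : Surjective p) (hip : Exact i p) (h : K →ₗ[Λ] T) :
    ∃ g : F →ₗ[Λ] T, g ∘ₗ i = h := by
  have h0 : 0 ∘ₗ h = p ∘ₗ i := by rw [zero_comp, hip.linearMap_comp_eq_zero]
  obtain ⟨hinl, hdesc, hexact⟩ := Pushout.exact_inl_desc hi hp hip h0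
  obtain ⟨r, hr⟩ := ext1Zero_iff_exact.mp hC _ _ _ hinl hdesc hexact
  exact ⟨r ∘ₗ Pushout.inr h i, by rw [comp_assoc, ← Pushout.condition, ← comp_assoc, hr, id_comp]⟩

theorem ext1Zero_of_presentation [Module.Projective Λ F] {k : K →ₗ[Λ] F} {π : F →ₗ[Λ] C}
    (hπ : Surjective π) (hkπ : Exact k π) (hext : ∀ h : K →ₗ[Λ] T, ∃ g : F →ₗ[Λ] T, g ∘ₗ k = h) :
    Ext1Zero Λ C T := by
  rw [ext1Zero_iff_exact]
  intro Z _ _ j q hj hq hjq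
  obtain ⟨φ, hφ⟩ := Module.projective_lifting_property q π hq
  obtain ⟨h, hh⟩ := hjq.exists_lift hj (φ := φ ∘ₗ k)
    (by rw [← comp_assoc, hφ, hkπ.linearMap_comp_eq_zero])
  obtain ⟨g, hg⟩ := hext h
  obtain ⟨s, hs⟩ := hkπ.exists_desc hπ (σ := φ - j ∘ₗ g)
    (by rw [sub_comp, comp_assoc, hg, hh, sub_self])
  refine hjq.exists_retraction_of_section hj hq (s := s) ((cancel_right hπ).mp ?_)
  rw [comp_assoc, hs, comp_sub, hφ, ← comp_assoc, hjq.linearMap_comp_eq_zero, zero_comp,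
    sub_zero, id_comp]

theorem HomZero.of_surjective (hM : HomZero Λ M T) {p : M →ₗ[Λ] C} (hp : Surjective p) :
    HomZero Λ C T :=
  fun f => (cancel_right hp).mp (by rw [hM (f ∘ₗ p), zero_comp])

theorem HomZero.of_exact_of_ext1Zero (hM : HomZero Λ M T) (hC : Ext1Zero Λ C T)
    {i : A →ₗ[Λ] M} {p : M →ₗ[Λ] C} (hi : Injective i) (hp : Surjective p) (hip : Exact i p) :
    HomZero Λ A T := by
  intro f
  obtain ⟨g, rfl⟩ := hC.exists_extension hi hp hip f
  rw [hM g, zero_comp]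

theorem HomZero.of_exact (hA : HomZero Λ A T) (hC : HomZero Λ C T)
    {i : A →ₗ[Λ] E} {p : E →ₗ[Λ] C} (hp : Surjective p) (hip : Exact i p) : HomZero Λ E T := by
  intro f
  obtain ⟨s, rfl⟩ := hip.exists_desc hp (hA (f ∘ₗ i))
  rw [hC s, zero_comp]

end Perp

section Pullback

variable {A C E N T Z : Type} [AddCommGroup A] [Module Λ A] [AddCommGroup C] [Module Λ C]
  [AddCommGroup E] [Module Λ E] [AddCommGroup N] [Module Λ N] [AddCommGroup T] [Module Λ T]
  [AddCommGroup Z] [Module Λ Z]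

def pullbackSubmodule (q : Z →ₗ[Λ] E) (f : N →ₗ[Λ] E) : Submodule Λ (Z × N) :=
  ker (q ∘ₗ fst Λ Z N - f ∘ₗ snd Λ Z N)

variable {q : Z →ₗ[Λ] E} {f : N →ₗ[Λ] E}

theorem mem_pullbackSubmodule {x : Z × N} : x ∈ pullbackSubmodule q f ↔ q x.1 = f x.2 := by
  simp [pullbackSubmodule, sub_eq_zero]

theorem exists_exact_pullback {j : T →ₗ[Λ] Z} (hj : Injective j) (hq : Surjective q)
    (hjq : Exact j q) (f : N →ₗ[Λ] E) :
    ∃ j' : T →ₗ[Λ] pullbackSubmodule q f,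
      Injective j' ∧ Surjective (snd Λ Z N ∘ₗ (pullbackSubmodule q f).subtype) ∧
      Exact j' (snd Λ Z N ∘ₗ (pullbackSubmodule q f).subtype) ∧
      (fst Λ Z N ∘ₗ (pullbackSubmodule q f).subtype) ∘ₗ j' = j := by
  refine ⟨(j.prod 0).codRestrict _ fun t => mem_pullbackSubmodule.mpr
    (by simp [hjq.apply_apply_eq_zero]), fun t t' h => hj congr(($h : Z × N).1), fun n => ?_,
    fun x => ?_, rfl⟩
  · obtain ⟨z, hz⟩ := hq (f n)
    exact ⟨⟨(z, n), mem_pullbackSubmodule.mpr hz⟩, rfl⟩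
  · refine ⟨fun (hx : (x : Z × N).2 = 0) => ?_, fun ⟨t, ht⟩ => ht ▸ rfl⟩
    have hqx : q (x : Z × N).1 = 0 := by rw [mem_pullbackSubmodule.mp x.2, hx, map_zero]
    obtain ⟨t, ht⟩ := (hjq _).mp hqx
    exact ⟨t, Subtype.ext (Prod.ext ht hx.symm)⟩

theorem pullback_fst_injective (hf : Injective f) :
    Injective (fst Λ Z N ∘ₗ (pullbackSubmodule q f).subtype) := by
  refine (injective_iff_map_eq_zero _).mpr fun x (hx : (x : Z × N).1 = 0) => ?_
  have hfx : f (x : Z × N).2 = f 0 := by rw [← mem_pullbackSubmodule.mp x.2, hx, map_zero, map_zero]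
  exact Subtype.ext (Prod.ext hx (hf hfx))

theorem pullback_fst_surjective (hf : Surjective f) :
    Surjective (fst Λ Z N ∘ₗ (pullbackSubmodule q f).subtype) := fun z => by
  obtain ⟨n, hn⟩ := hf (q z)
  exact ⟨⟨(z, n), mem_pullbackSubmodule.mpr hn.symm⟩, rfl⟩

theorem exact_pullback_fst_comp {p : E →ₗ[Λ] C} (hfp : Exact f p) :
    Exact (fst Λ Z N ∘ₗ (pullbackSubmodule q f).subtype) (p ∘ₗ q) := fun z => by
  refine (hfp (q z)).trans ⟨fun ⟨n, hn⟩ => ?_, fun ⟨x, hx⟩ => ?_⟩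
  · exact ⟨⟨(z, n), mem_pullbackSubmodule.mpr hn.symm⟩, rfl⟩
  · exact ⟨(x : Z × N).2, by rw [← hx]; exact (mem_pullbackSubmodule.mp x.2).symm⟩

theorem exists_exact_pullback_fst {i : A →ₗ[Λ] N} (hif : Exact i f) :
    ∃ μ : A →ₗ[Λ] pullbackSubmodule q f,
      Exact μ (fst Λ Z N ∘ₗ (pullbackSubmodule q f).subtype) := by
  refine ⟨(LinearMap.inr Λ Z N ∘ₗ i).codRestrict _ fun a => mem_pullbackSubmodule.mpr
    (by simp [hif.apply_apply_eq_zero]), fun x => ⟨fun (hx : (x : Z × N).1 = 0) => ?_,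
      fun ⟨a, ha⟩ => ha ▸ rfl⟩⟩
  have hfx : f (x : Z × N).2 = 0 := by rw [← mem_pullbackSubmodule.mp x.2, hx, map_zero]
  obtain ⟨a, ha⟩ := (hif _).mp hfx
  exact ⟨a, Subtype.ext (Prod.ext hx.symm ha)⟩

end Pullback

section Closure

variable {A B C E M N T X : Type} [AddCommGroup A] [Module Λ A] [AddCommGroup B] [Module Λ B]
  [AddCommGroup C] [Module Λ C] [AddCommGroup E] [Module Λ E] [AddCommGroup M] [Module Λ M]
  [AddCommGroup N] [Module Λ N] [AddCommGroup T] [Module Λ T] [AddCommGroup X] [Module Λ X]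

/-- A retraction of the pulled-back extension over `A ≅ q⁻¹(i A)` extends to `Z`,
since the cokernel of `q⁻¹(i A) ⊆ Z` is `C`. -/
theorem Ext1Zero.of_exact (hA : Ext1Zero Λ A T) (hC : Ext1Zero Λ C T) {i : A →ₗ[Λ] E}
    {p : E →ₗ[Λ] C} (hi : Injective i) (hp : Surjective p) (hip : Exact i p) :
    Ext1Zero Λ E T := by
  rw [ext1Zero_iff_exact]
  intro Z _ _ j q hj hq hjq
  obtain ⟨j', hj', hq', hjq', hfst⟩ := exists_exact_pullback hj hq hjq i
  obtain ⟨r₁, hr₁⟩ := ext1Zero_iff_exact.mp hA _ j' _ hj' hq' hjq'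
  obtain ⟨r, hr⟩ := hC.exists_extension (pullback_fst_injective hi)
    (hp.comp hq : Surjective (p ∘ q)) (exact_pullback_fst_comp hip) r₁
  exact ⟨r, by rw [← hfst, ← comp_assoc, hr, hr₁]⟩

theorem InLeftPerp.of_exact (hA : InLeftPerp Λ T A) (hC : InLeftPerp Λ T C) {i : A →ₗ[Λ] E}
    {p : E →ₗ[Λ] C} (hi : Injective i) (hp : Surjective p) (hip : Exact i p) :
    InLeftPerp Λ T E :=
  ⟨HomZero.of_exact hA.1 hC.1 hp hip, Ext1Zero.of_exact hA.2 hC.2 hi hp hip⟩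

/-- The retraction of the extension pulled back along `p` vanishes on the kernel `A` of the
projection to `Z`, hence factors through `Z`. -/
theorem Ext1Zero.of_exact_of_homZero (hA : HomZero Λ A T) (hN : Ext1Zero Λ N T)
    {i : A →ₗ[Λ] N} {p : N →ₗ[Λ] C} (hp : Surjective p) (hip : Exact i p) :
    Ext1Zero Λ C T := by
  rw [ext1Zero_iff_exact]
  intro Z _ _ j q hj hq hjq
  obtain ⟨j', hj', hq', hjq', hfst⟩ := exists_exact_pullback hj hq hjq p
  obtain ⟨r₁, hr₁⟩ := ext1Zero_iff_exact.mp hN _ j' _ hj' hq' hjq'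
  obtain ⟨μ, hμ⟩ := exists_exact_pullback_fst (q := q) hip
  obtain ⟨r, hr⟩ := hμ.exists_desc (pullback_fst_surjective hp) (hA (r₁ ∘ₗ μ))
  exact ⟨r, by rw [← hfst, ← comp_assoc, hr, hr₁]⟩

namespace IsHereditaryRing

variable (hH : IsHereditaryRing Λ)
include hH

theorem ext1Zero_submodule (N : Submodule Λ M) (hM : Ext1Zero Λ M T) : Ext1Zero Λ N T := by
  let π := Finsupp.linearCombination Λ (id : M → M)
  have hπ : Surjective π := Finsupp.linearCombination_surjective Λ Function.surjective_id
  have hle : ker π ≤ N.comap π := fun x hx => by simp [mem_ker.mp hx]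
  have := hH _ inferInstance (N.comap π)
  refine ext1Zero_of_presentation (F := N.comap π) (K := ker π) (k := Submodule.inclusion hle)
    (π := π.submoduleComap N) (submoduleComap_surjective_of_surjective _ _ hπ) (fun x => ?_)
    fun h => ?_
  · refine ⟨fun hx => ⟨⟨x, congr_arg Subtype.val hx⟩, rfl⟩, ?_⟩
    rintro ⟨y, rfl⟩
    exact Subtype.ext y.2
  · obtain ⟨g, hg⟩ := hM.exists_extension (K := ker π) (ker π).injective_subtype hπ
      (exact_subtype_ker_map π) h
    exact ⟨g ∘ₗ (N.comap π).subtype, by rw [comp_assoc, Submodule.subtype_comp_inclusion, hg]⟩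

theorem inLeftPerp_range (hM : InLeftPerp Λ T M) (hN : InLeftPerp Λ T N) (f : M →ₗ[Λ] N) :
    InLeftPerp Λ T (range f) :=
  ⟨HomZero.of_surjective hM.1 f.surjective_rangeRestrict, hH.ext1Zero_submodule _ hN.2⟩

theorem inLeftPerp_ker (hM : InLeftPerp Λ T M) (hN : InLeftPerp Λ T N) (f : M →ₗ[Λ] N) :
    InLeftPerp Λ T (ker f) := by
  have hexact : Exact (ker f).subtype f.rangeRestrict := by
    rw [LinearMap.exact_iff, ker_rangeRestrict, Submodule.range_subtype]
  exact ⟨HomZero.of_exact_of_ext1Zero hM.1 (hH.inLeftPerp_range hM hN f).2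
    (ker f).injective_subtype f.surjective_rangeRestrict hexact, hH.ext1Zero_submodule _ hM.2⟩

theorem inLeftPerp_quotient_range (hM : InLeftPerp Λ T M) (hN : InLeftPerp Λ T N)
    (f : M →ₗ[Λ] N) : InLeftPerp Λ T (N ⧸ range f) :=
  ⟨HomZero.of_surjective hN.1 (range f).mkQ_surjective,
    Ext1Zero.of_exact_of_homZero (hH.inLeftPerp_range hM hN f).1 hN.2 (range f).mkQ_surjective
      (exact_subtype_mkQ _)⟩

theorem exists_extension_lift (g : B →ₗ[Λ] C) (hg : Surjective g) (iX : C →ₗ[Λ] X)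
    (pX : X →ₗ[Λ] A) (hiX : Injective iX) (hpX : Surjective pX) (hX : Exact iX pX) :
    ∃ (Y : Type) (_ : AddCommGroup Y) (_ : Module Λ Y)
      (iY : B →ₗ[Λ] Y) (pY : Y →ₗ[Λ] A) (ψ : Y →ₗ[Λ] X),
      Injective iY ∧ Surjective pY ∧ ker pY = range iY ∧
      ψ ∘ₗ iY = iX ∘ₗ g ∧ pX ∘ₗ ψ = pY := by
  let π := Finsupp.linearCombination Λ (id : A → A)
  have hπ : Surjective π := Finsupp.linearCombination_surjective Λ Function.surjective_id
  have hKπ := exact_subtype_ker_map π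
  have := hH _ inferInstance (ker π)
  obtain ⟨φ, hφ⟩ := Module.projective_lifting_property pX π hpX
  obtain ⟨h, hh⟩ := hX.exists_lift hiX (X := ker π) (φ := φ ∘ₗ (ker π).subtype)
    (by rw [← comp_assoc, hφ, hKπ.linearMap_comp_eq_zero])
  obtain ⟨h', rfl⟩ := Module.projective_lifting_property g h hg
  have h0 : 0 ∘ₗ h' = π ∘ₗ (ker π).subtype := by rw [zero_comp, hKπ.linearMap_comp_eq_zero]
  obtain ⟨hinl, hdesc, hexact⟩ :=
    Pushout.exact_inl_desc (A := ker π) (ker π).injective_subtype hπ hKπ h0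
  refine ⟨_, inferInstance, inferInstance, _, _,
    Pushout.desc (iX ∘ₗ g) φ (by rw [comp_assoc, hh]), hinl, hdesc, hexact.linearMap_ker_eq,
    Pushout.desc_comp_inl _ _ _, ?_⟩
  refine Pushout.hom_ext ?_ ?_
  · rw [comp_assoc, Pushout.desc_comp_inl, ← comp_assoc, hX.linearMap_comp_eq_zero,
      Pushout.desc_comp_inl, zero_comp]
  · rw [comp_assoc, Pushout.desc_comp_inr, hφ, Pushout.desc_comp_inr]

end IsHereditaryRing

end Closure

end Perpendicular

theorem left_perp_abelian_hereditary_general (Λ : Type) [Ring Λ]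
    (hH : IsHereditaryRing Λ)
    (T : Type) [AddCommGroup T] [Module Λ T] :
    (∀ (M N : Type) [AddCommGroup M] [Module Λ M] [AddCommGroup N] [Module Λ N],
      InLeftPerp Λ T M → InLeftPerp Λ T N → ∀ f : M →ₗ[Λ] N,
        InLeftPerp Λ T ↥(LinearMap.ker f) ∧ InLeftPerp Λ T (N ⧸ LinearMap.range f)) ∧
    (∀ (A E C : Type) [AddCommGroup A] [Module Λ A] [AddCommGroup E] [Module Λ E]
        [AddCommGroup C] [Module Λ C],
      InLeftPerp Λ T A → InLeftPerp Λ T C →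
      ∀ (i : A →ₗ[Λ] E) (p : E →ₗ[Λ] C), Function.Injective i → Function.Surjective p →
        LinearMap.ker p = LinearMap.range i → InLeftPerp Λ T E) ∧
    (∀ (A B C : Type) [AddCommGroup A] [Module Λ A] [AddCommGroup B] [Module Λ B]
        [AddCommGroup C] [Module Λ C],
      InLeftPerp Λ T A → InLeftPerp Λ T B → InLeftPerp Λ T C →
      ∀ g : B →ₗ[Λ] C, Function.Surjective g →
      ∀ (X : Type) [AddCommGroup X] [Module Λ X] (iX : C →ₗ[Λ] X) (pX : X →ₗ[Λ] A),
        Function.Injective iX → Function.Surjective pX →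
        LinearMap.ker pX = LinearMap.range iX →
        ∃ (Y : Type) (_ : AddCommGroup Y) (_ : Module Λ Y)
          (iY : B →ₗ[Λ] Y) (pY : Y →ₗ[Λ] A) (ψ : Y →ₗ[Λ] X),
          Function.Injective iY ∧ Function.Surjective pY ∧
          LinearMap.ker pY = LinearMap.range iY ∧
          ψ ∘ₗ iY = iX ∘ₗ g ∧ pX ∘ₗ ψ = pY) :=
  ⟨fun _ _ _ _ _ _ hM hN f => ⟨hH.inLeftPerp_ker hM hN f, hH.inLeftPerp_quotient_range hM hN f⟩,
    fun _ _ _ _ _ _ _ _ _ hA hC _ _ hi hp hip =>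
      hA.of_exact hC hi hp (LinearMap.exact_iff.mpr hip),
    fun _ _ _ _ _ _ _ _ _ _ _ _ g hg _ _ _ iX pX hiX hpX hX =>
      hH.exists_extension_lift g hg iX pX hiX hpX (LinearMap.exact_iff.mpr hX)⟩

/-- For a rigid module `T` over a hereditary artin algebra, the left
perpendicular category `⊥T` is an exact abelian subcategory of `mod Λ`:
it is closed under kernels, cokernels and extensions; and it is hereditary:
for `A, B, C ∈ ⊥T`, every extension of `A` by `C` is the pushout, along any
given epimorphism `g : B ↠ C`, of an extension of `A` by `B` (right exactness
of `Ext¹(A,−)`, i.e. `Ext²` vanishes in `⊥T`). -/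
theorem left_perp_abelian_hereditary (Λ : Type) [Ring Λ] [IsArtinianRing Λ]
    (hH : IsHereditaryRing Λ)
    (T : Type) [AddCommGroup T] [Module Λ T]
    (hTfl : IsFiniteLength Λ T) (hrigid : Ext1Zero Λ T T) :
    (∀ (M N : Type) [AddCommGroup M] [Module Λ M] [AddCommGroup N] [Module Λ N],
      InLeftPerp Λ T M → InLeftPerp Λ T N → ∀ f : M →ₗ[Λ] N,
        InLeftPerp Λ T ↥(LinearMap.ker f) ∧ InLeftPerp Λ T (N ⧸ LinearMap.range f)) ∧
    (∀ (A E C : Type) [AddCommGroup A] [Module Λ A] [AddCommGroup E] [Module Λ E]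
        [AddCommGroup C] [Module Λ C],
      InLeftPerp Λ T A → InLeftPerp Λ T C →
      ∀ (i : A →ₗ[Λ] E) (p : E →ₗ[Λ] C), Function.Injective i → Function.Surjective p →
        LinearMap.ker p = LinearMap.range i → InLeftPerp Λ T E) ∧
    (∀ (A B C : Type) [AddCommGroup A] [Module Λ A] [AddCommGroup B] [Module Λ B]
        [AddCommGroup C] [Module Λ C],
      InLeftPerp Λ T A → InLeftPerp Λ T B → InLeftPerp Λ T C →
      ∀ g : B →ₗ[Λ] C, Function.Surjective g →
      ∀ (X : Type) [AddCommGroup X] [Module Λ X] (iX : C →ₗ[Λ] X) (pX : X →ₗ[Λ] A),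
        Function.Injective iX → Function.Surjective pX →
        LinearMap.ker pX = LinearMap.range iX →
        ∃ (Y : Type) (_ : AddCommGroup Y) (_ : Module Λ Y)
          (iY : B →ₗ[Λ] Y) (pY : Y →ₗ[Λ] A) (ψ : Y →ₗ[Λ] X),
          Function.Injective iY ∧ Function.Surjective pY ∧
          LinearMap.ker pY = LinearMap.range iY ∧
          ψ ∘ₗ iY = iX ∘ₗ g ∧ pX ∘ₗ ψ = pY) :=
  left_perp_abelian_hereditary_general Λ hH T
end
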